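/- For every z ∈ ℂ with Re z > 0 and every w ∈ ℂ, ∫_0^1 e^{−wt} t^{z−1} dt = e^{−w} ∑_{j=0}^∞ w^j / (z)_{j+1}, where (z)_{j+1} = z(z+1)···(z+j) is the Pochhammer symbol. -/

import Mathlib

open MeasureTheory

/-- For `Re z > 0` and any `w ∈ ℂ`,
`∫_0^1 e^{−wt} t^{z−1} dt = e^{−w} ∑_{j=0}^∞ w^j/(z)_{j+1}`,
where `(z)_{j+1} = z(z+1)⋯(z+j)` is the Pochhammer symbol. -/
theorem lower_incomplete_gamma_series (z w : ℂ) (hz : 0 < z.re) :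
    (∫ t in (0:ℝ)..1, Complex.exp (-w * (t:ℂ)) * (t:ℂ) ^ (z - 1)) =
      Complex.exp (-w) *
        ∑' j : ℕ, w ^ j / (∏ i ∈ Finset.range (j+1), (z + (i:ℂ))) := by
  set F : ℕ → ℝ → ℂ := fun n t => w ^ n / (Nat.factorial n : ℂ) * ((t:ℂ) ^ (z - 1) * (1 - (t:ℂ)) ^ n) with hF
  -- each F n is integrable on Ioc 0 1
  have hβ : ∀ n : ℕ, IntervalIntegrable
      (fun t : ℝ => (t:ℂ) ^ (z - 1) * (1 - (t:ℂ)) ^ n) volume 0 1 := by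
    intro n
    have := Complex.betaIntegral_convergent hz
      (v := (n : ℂ) + 1) (by simp; positivity)
    simpa using this
  have hFint : ∀ n : ℕ, IntegrableOn (F n) (Set.Ioc (0:ℝ) 1) volume := by
    intro n
    have : IntervalIntegrable (F n) volume 0 1 := (hβ n).const_mul _
    rwa [intervalIntegrable_iff, Set.uIoc_of_le zero_le_one] at this
  -- norm bound
  have hnorm : ∀ n : ℕ, ∀ t ∈ Set.Ioc (0:ℝ) 1,
      ‖F n t‖ ≤ ‖w‖ ^ n / (n.factorial : ℝ) * t ^ (z.re - 1) := by
    intro n t ht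
    have ht0 : 0 < t := ht.1
    have h1 : ‖(t:ℂ) ^ (z - 1)‖ = t ^ (z.re - 1) := by
      rw [Complex.norm_cpow_eq_rpow_re_of_pos ht0]
      simp
    have h2 : ‖(1 - (t:ℂ)) ^ n‖ ≤ 1 := by
      rw [norm_pow]
      apply pow_le_one₀ (norm_nonneg _)
      have : ((1 - t : ℝ) : ℂ) = 1 - (t:ℂ) := by push_cast; ring
      rw [← this, Complex.norm_real, Real.norm_of_nonneg (by linarith [ht.2])]
      linarith [ht0]
    calc ‖F n t‖ = ‖w ^ n / (n.factorial : ℂ)‖ * (‖(t:ℂ) ^ (z - 1)‖ * ‖(1 - (t:ℂ)) ^ n‖) := by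
          simp [hF, norm_mul]
      _ ≤ ‖w ^ n / (n.factorial : ℂ)‖ * (t ^ (z.re - 1) * 1) := by
          apply mul_le_mul_of_nonneg_left _ (norm_nonneg _)
          rw [h1]
          exact mul_le_mul_of_nonneg_left h2 (Real.rpow_nonneg ht0.le _)
      _ = ‖w‖ ^ n / (n.factorial : ℝ) * t ^ (z.re - 1) := by
          rw [mul_one, norm_div, norm_pow]
          simp [Complex.norm_natCast]
  -- the dominating function is integrable
  have hgint : ∀ n : ℕ, IntegrableOn (fun t : ℝ => ‖w‖ ^ n / (n.factorial : ℝ) * t ^ (z.re - 1))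
      (Set.Ioc (0:ℝ) 1) volume := by
    intro n
    apply Integrable.const_mul
    have : IntervalIntegrable (fun t : ℝ => t ^ (z.re - 1)) volume 0 1 :=
      intervalIntegral.intervalIntegrable_rpow' (by linarith)
    rwa [intervalIntegrable_iff, Set.uIoc_of_le zero_le_one] at this
  -- summability of integrals of norms
  have hsum : Summable fun n : ℕ => ∫ t in Set.Ioc (0:ℝ) 1, ‖F n t‖ := by
    set C : ℝ := ∫ t in Set.Ioc (0:ℝ) 1, t ^ (z.re - 1) with hC
    apply Summable.of_nonneg_of_le
      (fun n => integral_nonneg fun t => norm_nonneg _)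
      (fun n => ?_)
      (((Real.summable_pow_div_factorial (‖w‖)).mul_right C))
    have : ∫ t in Set.Ioc (0:ℝ) 1, ‖F n t‖ ≤
        ∫ t in Set.Ioc (0:ℝ) 1, ‖w‖ ^ n / (n.factorial : ℝ) * t ^ (z.re - 1) := by
      apply setIntegral_mono_on (hFint n).norm (hgint n) measurableSet_Ioc
      exact hnorm n
    rw [integral_const_mul] at this
    exact this
  -- interchange sum and integral
  have hswap : ∑' n, (∫ t in Set.Ioc (0:ℝ) 1, F n t) =
      ∫ t in Set.Ioc (0:ℝ) 1, (∑' n, F n t) :=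
    integral_tsum_of_summable_integral_norm hFint hsum
  -- pointwise sum of the series
  have hpt : ∀ t : ℝ, (∑' n, F n t) = Complex.exp (w * (1 - (t:ℂ))) * (t:ℂ) ^ (z - 1) := by
    intro t
    have : ∀ n : ℕ, F n t = (w * (1 - (t:ℂ))) ^ n / n.factorial * (t:ℂ) ^ (z - 1) := by
      intro n
      simp only [hF, mul_pow]
      ring
    rw [tsum_congr this, tsum_mul_right]
    congr 1
    rw [Complex.exp_eq_exp_ℂ, NormedSpace.exp_eq_tsum_div]
  -- value of each integral: Beta integral
  have hval : ∀ n : ℕ, (∫ t in Set.Ioc (0:ℝ) 1, F n t) =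
      w ^ n / ∏ i ∈ Finset.range (n+1), (z + (i:ℂ)) := by
    intro n
    have h1 : (∫ t in Set.Ioc (0:ℝ) 1, F n t) =
        w ^ n / (n.factorial : ℂ) * ∫ t in (0:ℝ)..1, (t:ℂ) ^ (z - 1) * (1 - (t:ℂ)) ^ n := by
      rw [intervalIntegral.integral_of_le zero_le_one, ← integral_const_mul]
    have h2 : (∫ t in (0:ℝ)..1, (t:ℂ) ^ (z - 1) * (1 - (t:ℂ)) ^ n) =
        Complex.betaIntegral z ((n:ℂ) + 1) := by
      rw [Complex.betaIntegral]
      congr 1 with t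
      congr 1
      rw [show (n:ℂ) + 1 - 1 = (n:ℂ) by ring, Complex.cpow_natCast]
    have h3 := Complex.betaIntegral_eval_nat_add_one_right hz n
    rw [h1, h2, h3]
    have hne : ((n.factorial : ℂ)) ≠ 0 := by exact_mod_cast Nat.factorial_ne_zero n
    field_simp
  -- assemble
  have hexp : ∀ t : ℝ, Complex.exp (-w * (t:ℂ)) =
      Complex.exp (-w) * Complex.exp (w * (1 - (t:ℂ))) := by
    intro t
    rw [← Complex.exp_add]
    ring_nf
  calc (∫ t in (0:ℝ)..1, Complex.exp (-w * (t:ℂ)) * (t:ℂ) ^ (z - 1))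
      = ∫ t in (0:ℝ)..1, Complex.exp (-w) *
          (Complex.exp (w * (1 - (t:ℂ))) * (t:ℂ) ^ (z - 1)) := by
        congr 1 with t
        rw [hexp t]
        ring
    _ = Complex.exp (-w) * ∫ t in (0:ℝ)..1,
          Complex.exp (w * (1 - (t:ℂ))) * (t:ℂ) ^ (z - 1) := by
        rw [intervalIntegral.integral_const_mul]
    _ = Complex.exp (-w) * ∑' j : ℕ, w ^ j /
          (∏ i ∈ Finset.range (j+1), (z + (i:ℂ))) := by
        congr 1
        rw [intervalIntegral.integral_of_le zero_le_one]
        simp_rw [← hpt]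
        rw [← hswap, tsum_congr hval]
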